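/- arXiv:2111.14261 — 3 statements merged into one kernel-verified Lean document; each statement's English description precedes it below -/
import Mathlib

section
/- Let (ξ_k)_{k≥1} be independent real-valued random variables on a probability space such that E[ξ_k] = 0 and E[ξ_k²] > 0 for every k, and suppose there exist real numbers c > 0 and α ≥ −1 such that lim_{k→∞} k^{−α} E[ξ_k²] = c. Then, with probability one, lim_{N→∞} (Σ_{k=1}^N ξ_k)/(Σ_{k=1}^N E[ξ_k²]) = 0. -/
/-!
Write `B_n = ∑_{k ≤ n} E[ξ_k²]`. The growth condition gives `E[ξ_k²] ≥ (c/2) k^α ≥ (c/2) k⁻¹`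
for large `k`, so `B_n → ∞`. The partial sums of `∑ ξ_k / B_k` form a martingale whose variance
`∑ E[ξ_k²] / B_k²` stays below `2 / E[ξ_1²]`, because each term is at most `1/B_{k-1} - 1/B_k`;
being L¹-bounded, it converges almost surely. Kronecker's lemma then gives `(∑_{k ≤ N} ξ_k) / B_N → 0`.
-/

open MeasureTheory ProbabilityTheory Filter Topology Finset Asymptotics

theorem Filter.Tendsto.sum_range_mul_div_sum_range {b s : ℕ → ℝ} {L : ℝ}
    (hs : Tendsto s atTop (𝓝 L)) (hb : ∀ i, 0 ≤ b i)
    (hB : Tendsto (fun n => ∑ i ∈ range n, b i) atTop atTop) :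
    Tendsto (fun n => (∑ i ∈ range n, b i * s i) / ∑ i ∈ range n, b i) atTop (𝓝 L) := by
  have hsL : Tendsto (fun i => s i - L) atTop (𝓝 0) := by simpa using hs.sub_const L
  have hterm : (fun i => b i * (s i - L)) =o[atTop] b := by
    simpa using (isBigO_refl b atTop).mul_isLittleO ((isLittleO_one_iff ℝ).2 hsL)
  have herr := ((hterm.sum_range hb hB).tendsto_div_nhds_zero).const_add L
  rw [add_zero] at herr
  refine herr.congr' ?_
  filter_upwards [hB.eventually_gt_atTop 0] with n hn
  rw [add_div' _ _ _ hn.ne', mul_sum, ← sum_add_distrib]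
  congr 1
  exact sum_congr rfl fun i _ => by ring

theorem sum_range_mul_sub_eq (B s : ℕ → ℝ) (n : ℕ) :
    ∑ i ∈ range n, B (i + 1) * (s (i + 1) - s i) =
      B n * s n - B 0 * s 0 - ∑ i ∈ range n, (B (i + 1) - B i) * s i := by
  induction n with
  | zero => simp
  | succ n ih => rw [sum_range_succ, sum_range_succ, ih]; ring

theorem tendsto_sum_range_div_sum_range_zero {b x : ℕ → ℝ} (hb : ∀ i, 0 < b i)
    (hB : Tendsto (fun n => ∑ i ∈ range n, b i) atTop atTop) {L : ℝ}
    (hs : Tendsto (fun n => ∑ i ∈ range n, x i / ∑ j ∈ range (i + 1), b j) atTop (𝓝 L)) :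
    Tendsto (fun n => (∑ i ∈ range n, x i) / ∑ i ∈ range n, b i) atTop (𝓝 0) := by
  set B : ℕ → ℝ := fun n => ∑ i ∈ range n, b i
  set s : ℕ → ℝ := fun n => ∑ i ∈ range n, x i / B (i + 1)
  have hB_pos (n : ℕ) : 0 < B (n + 1) := sum_pos (fun i _ => hb i) nonempty_range_add_one
  have hx (n : ℕ) : ∑ i ∈ range n, x i = B n * s n - ∑ i ∈ range n, b i * s i := by
    simpa only [B, s, sum_range_succ_sub_sum, sum_range_zero, zero_mul, sub_zero,
      mul_div_cancel₀ _ (hB_pos _).ne'] using sum_range_mul_sub_eq B s n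
  have hlim := hs.sub (hs.sum_range_mul_div_sum_range (fun i => (hb i).le) hB)
  rw [sub_self] at hlim
  refine hlim.congr' ?_
  filter_upwards [hB.eventually_gt_atTop 0] with n hn
  rw [hx, sub_div, mul_div_cancel_left₀ _ hn.ne']

theorem sum_range_div_sq_sum_range_le {a : ℕ → ℝ} (h0 : 0 < a 0) (ha : ∀ i, 0 ≤ a i) (n : ℕ) :
    ∑ i ∈ range n, a i / (∑ j ∈ range (i + 1), a j) ^ 2 ≤ 2 / a 0 := by
  set A : ℕ → ℝ := fun n => ∑ j ∈ range n, a j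
  have hA_pos (n : ℕ) : 0 < A (n + 1) :=
    h0.trans_le (single_le_sum (fun j _ => ha j) (mem_range.2 n.succ_pos))
  have htele (n : ℕ) : ∑ i ∈ range (n + 1), a i / A (i + 1) ^ 2 ≤ 2 / a 0 - 1 / A (n + 1) := by
    induction n with
    | zero =>
      simp only [A, zero_add, sum_range_one, sq, div_mul_cancel_left₀ h0.ne']
      exact le_of_eq (by ring)
    | succ n ih =>
      have hsucc : A (n + 2) = A (n + 1) + a (n + 1) := sum_range_succ a (n + 1)
      have hstep : a (n + 1) / A (n + 2) ^ 2 ≤ 1 / A (n + 1) - 1 / A (n + 2) :=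
        calc a (n + 1) / A (n + 2) ^ 2 ≤ a (n + 1) / (A (n + 1) * A (n + 2)) := by
              have := hA_pos n
              have := hA_pos (n + 1)
              rw [sq]
              gcongr
              all_goals linarith [ha (n + 1)]
          _ = 1 / A (n + 1) - 1 / A (n + 2) := by
              rw [div_sub_div _ _ (hA_pos n).ne' (hA_pos _).ne', hsucc]
              ring
      rw [sum_range_succ]
      linarith
  cases n with
  | zero => rw [sum_range_zero]; positivity
  | succ n => linarith [htele n, one_div_pos.2 (hA_pos n)]

theorem tendsto_sum_range_atTop_of_tendsto_rpow_neg_mul {a : ℕ → ℝ} {c α : ℝ} (ha : ∀ k, 0 ≤ a k)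
    (hc : 0 < c) (hα : -1 ≤ α) (h : Tendsto (fun k : ℕ => (k : ℝ) ^ (-α) * a k) atTop (𝓝 c)) :
    Tendsto (fun n => ∑ k ∈ range n, a k) atTop atTop := by
  rw [← not_summable_iff_tendsto_nat_atTop_of_nonneg ha]
  intro hsum
  have hpow : (fun k : ℕ => (k : ℝ) ^ α) =O[atTop] a := by
    refine IsBigO.of_bound (2 / c) ?_
    filter_upwards [h.eventually (lt_mem_nhds (half_lt_self hc)), eventually_gt_atTop 0]
      with k hk hk0
    have hk0' : (0 : ℝ) < k := Nat.cast_pos.2 hk0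
    have hrpow : (k : ℝ) ^ α * (k : ℝ) ^ (-α) = 1 := by
      rw [← Real.rpow_add hk0', add_neg_cancel, Real.rpow_zero]
    rw [Real.norm_of_nonneg (Real.rpow_nonneg hk0'.le _), Real.norm_of_nonneg (ha k)]
    calc (k : ℝ) ^ α = 2 / c * (c / 2) * (k : ℝ) ^ α := by field_simp
      _ ≤ 2 / c * ((k : ℝ) ^ (-α) * a k) * (k : ℝ) ^ α := by gcongr
      _ = 2 / c * a k := by
        rw [mul_assoc, mul_right_comm _ (a k), mul_comm _ ((k : ℝ) ^ α), hrpow, one_mul]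
  exact (Real.summable_nat_rpow.1 (summable_of_isBigO_nat hsum hpow)).not_ge hα

namespace ProbabilityTheory

variable {Ω : Type*} {mΩ : MeasurableSpace Ω} {μ : Measure Ω}

theorem eLpNorm_one_le_ofReal_sqrt_variance [IsProbabilityMeasure μ] {X : Ω → ℝ}
    (hX : MemLp X 2 μ) (hmean : μ[X] = 0) :
    eLpNorm X 1 μ ≤ ENNReal.ofReal √(Var[X; μ]) := by
  calc eLpNorm X 1 μ ≤ eLpNorm X 2 μ :=
        eLpNorm_le_eLpNorm_of_exponent_le one_le_two hX.aestronglyMeasurable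
    _ = ENNReal.ofReal √(Var[X; μ]) := by
        rw [hX.eLpNorm_eq_integral_rpow_norm two_ne_zero ENNReal.ofNat_ne_top,
          variance_of_integral_eq_zero hX.aestronglyMeasurable.aemeasurable hmean,
          Real.sqrt_eq_rpow]
        simp

theorem iIndepFun.martingale_sum_range_succ {E : Type*} [NormedAddCommGroup E]
    [NormedSpace ℝ E] [CompleteSpace E] [MeasurableSpace E] [BorelSpace E]
    [SecondCountableTopology E] [IsProbabilityMeasure μ] {f : ℕ → Ω → E}
    (hf : ∀ i, StronglyMeasurable (f i)) (hint : ∀ i, Integrable (f i) μ)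
    (hind : iIndepFun f μ) (hmean : ∀ i, μ[f i] = 0) :
    Martingale (fun n => ∑ i ∈ range (n + 1), f i) (Filtration.natural f hf) μ := by
  refine martingale_of_condExp_sub_eq_zero_nat ?_
    (fun n => integrable_finsetSum' _ fun i _ => hint i) fun n => ?_
  · intro n
    refine Finset.stronglyMeasurable_sum _ fun i hi => ?_
    exact (Filtration.stronglyAdapted_natural hf i).mono
      ((Filtration.natural f hf).mono (Nat.lt_succ_iff.1 (mem_range.1 hi)))
  · rw [sum_range_succ, add_sub_cancel_left]
    exact (hind.condExp_natural_ae_eq_of_lt hf (Nat.lt_succ_self n)).trans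
      (by simp only [hmean, Pi.zero_def]; rfl)

theorem iIndepFun.ae_exists_tendsto_sum_range [IsProbabilityMeasure μ] {f : ℕ → Ω → ℝ}
    (hf : ∀ i, StronglyMeasurable (f i)) (hL2 : ∀ i, MemLp (f i) 2 μ) (hind : iIndepFun f μ)
    (hmean : ∀ i, μ[f i] = 0) {K : ℝ} (hK : ∀ n, ∑ i ∈ range n, Var[f i; μ] ≤ K) :
    ∀ᵐ ω ∂μ, ∃ L, Tendsto (fun n => ∑ i ∈ range n, f i ω) atTop (𝓝 L) := by
  have hmart := hind.martingale_sum_range_succ hf (fun i => (hL2 i).integrable one_le_two) hmean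
  have hbdd (n : ℕ) : eLpNorm (∑ i ∈ range (n + 1), f i) 1 μ ≤ ENNReal.ofReal √K := by
    have hsum_L2 : MemLp (∑ i ∈ range (n + 1), f i) 2 μ := memLp_finsetSum' _ fun i _ => hL2 i
    have hsum_mean : μ[∑ i ∈ range (n + 1), f i] = 0 := by
      rw [Finset.sum_fn, integral_finsetSum _ fun i _ => (hL2 i).integrable one_le_two]
      exact sum_eq_zero fun i _ => hmean i
    have hsum_var : Var[∑ i ∈ range (n + 1), f i; μ] = ∑ i ∈ range (n + 1), Var[f i; μ] :=
      IndepFun.variance_sum (fun i _ => hL2 i) fun i _ j _ hij => hind.indepFun hij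
    refine (eLpNorm_one_le_ofReal_sqrt_variance hsum_L2 hsum_mean).trans ?_
    rw [hsum_var]
    gcongr
    exact hK (n + 1)
  filter_upwards [hmart.submartingale.exists_ae_tendsto_of_bdd hbdd] with ω ⟨L, hL⟩
  refine ⟨L, (tendsto_add_atTop_iff_nat 1).1 ?_⟩
  simpa only [Finset.sum_apply] using hL

end ProbabilityTheory

theorem slln_ratio_tendsto_zero_general
    {Ω : Type*} [MeasurableSpace Ω] (P : Measure Ω) [IsProbabilityMeasure P]
    (ξ : ℕ → Ω → ℝ) (hmeas : ∀ k, Measurable (ξ k))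
    (hindep : iIndepFun ξ P)
    (hsq : ∀ k, 1 ≤ k → Integrable (fun ω => (ξ k ω) ^ 2) P)
    (hmean : ∀ k, 1 ≤ k → ∫ ω, ξ k ω ∂P = 0)
    (hvarpos : ∀ k, 1 ≤ k → 0 < ∫ ω, (ξ k ω) ^ 2 ∂P)
    (c α : ℝ) (hc : 0 < c) (hα : -1 ≤ α)
    (hlim : Tendsto (fun k : ℕ => (k : ℝ) ^ (-α) * ∫ ω, (ξ k ω) ^ 2 ∂P)
      atTop (nhds c)) :
    ∀ᵐ ω ∂P, Tendsto
      (fun N : ℕ => (∑ k ∈ Finset.Icc 1 N, ξ k ω) /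
        (∑ k ∈ Finset.Icc 1 N, ∫ ω', (ξ k ω') ^ 2 ∂P))
      atTop (nhds 0) := by
  set σ2 : ℕ → ℝ := fun k => ∫ ω, (ξ k ω) ^ 2 ∂P
  set a : ℕ → ℝ := fun i => σ2 (i + 1)
  have ha_pos (i : ℕ) : 0 < a i := hvarpos _ (Nat.le_add_left 1 i)
  have hA_top : Tendsto (fun n => ∑ i ∈ range n, a i) atTop atTop := by
    have hσ2 := tendsto_sum_range_atTop_of_tendsto_rpow_neg_mul
      (fun k => integral_nonneg fun ω => sq_nonneg (ξ k ω)) hc hα hlim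
    refine (tendsto_atTop_add_const_right _ (-σ2 0) (hσ2.comp (tendsto_add_atTop_nat 1))).congr
      fun n => ?_
    rw [Function.comp_apply, sum_range_succ', add_neg_cancel_right]
  set f : ℕ → Ω → ℝ := fun i ω => ξ (i + 1) ω / ∑ j ∈ range (i + 1), a j
  have hf_indep : iIndepFun f P :=
    (hindep.precomp Nat.succ_injective).comp _ fun i => measurable_id.div_const _
  have hf_L2 (i : ℕ) : MemLp (f i) 2 P := by
    have hξ := (memLp_two_iff_integrable_sq (hmeas (i + 1)).aestronglyMeasurable).2
      (hsq _ (Nat.le_add_left 1 i))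
    simpa only [f, div_eq_mul_inv] using hξ.mul_const _
  have hf_mean (i : ℕ) : P[f i] = 0 := by
    simp only [f, integral_div, hmean _ (Nat.le_add_left 1 i), zero_div]
  have hf_var (i : ℕ) : Var[f i; P] = a i / (∑ j ∈ range (i + 1), a j) ^ 2 := by
    simp only [f, div_eq_mul_inv, variance_mul_const, inv_pow]
    rw [variance_of_integral_eq_zero (hmeas _).aemeasurable (hmean _ (Nat.le_add_left 1 i))]
  have hf_var_le (n : ℕ) : ∑ i ∈ range n, Var[f i; P] ≤ 2 / a 0 := by
    simpa only [hf_var] using sum_range_div_sq_sum_range_le (ha_pos 0) (fun i => (ha_pos i).le) n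
  have hIcc (g : ℕ → ℝ) (N : ℕ) : ∑ k ∈ Icc 1 N, g k = ∑ i ∈ range N, g (i + 1) := by
    rw [range_eq_Ico, sum_Ico_add' g 0 N 1, zero_add, Finset.Ico_add_one_right_eq_Icc]
  filter_upwards [hf_indep.ae_exists_tendsto_sum_range
    (fun i => ((hmeas _).div_const _).stronglyMeasurable) hf_L2 hf_mean hf_var_le] with ω ⟨L, hL⟩
  simpa only [hIcc] using tendsto_sum_range_div_sum_range_zero ha_pos hA_top hL

/-- Strong Law of Large Numbers (Shiryaev, Theorem IV.3.2, first part):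
for independent centered random variables `ξ_k` with positive second moments whose
second moments satisfy `k^{-α} E[ξ_k²] → c` for some `c > 0` and `α ≥ -1`, the
normalized sums `(∑_{k=1}^N ξ_k)/(∑_{k=1}^N E[ξ_k²])` tend to `0` almost surely. -/
theorem slln_ratio_tendsto_zero
    {Ω : Type*} [MeasurableSpace Ω] (P : Measure Ω) [IsProbabilityMeasure P]
    (ξ : ℕ → Ω → ℝ) (hmeas : ∀ k, Measurable (ξ k))
    (hindep : iIndepFun ξ P)
    (hint : ∀ k, 1 ≤ k → Integrable (ξ k) P)
    (hsq : ∀ k, 1 ≤ k → Integrable (fun ω => (ξ k ω) ^ 2) P)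
    (hmean : ∀ k, 1 ≤ k → ∫ ω, ξ k ω ∂P = 0)
    (hvarpos : ∀ k, 1 ≤ k → 0 < ∫ ω, (ξ k ω) ^ 2 ∂P)
    (c α : ℝ) (hc : 0 < c) (hα : -1 ≤ α)
    (hlim : Tendsto (fun k : ℕ => (k : ℝ) ^ (-α) * ∫ ω, (ξ k ω) ^ 2 ∂P)
      atTop (nhds c)) :
    ∀ᵐ ω ∂P, Tendsto
      (fun N : ℕ => (∑ k ∈ Finset.Icc 1 N, ξ k ω) /
        (∑ k ∈ Finset.Icc 1 N, ∫ ω', (ξ k ω') ^ 2 ∂P))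
      atTop (nhds 0) :=
  slln_ratio_tendsto_zero_general P ξ hmeas hindep hsq hmean hvarpos c α hc hα hlim
end

section
/- Let (ξ_k)_{k≥1} be independent real-valued random variables on a probability space such that E[ξ_k] = 0 and E[ξ_k²] > 0 for every k, suppose there exist real numbers c > 0 and α ≥ −1 such that lim_{k→∞} k^{−α} E[ξ_k²] = c, and suppose in addition there is a constant c₁ > 0, independent of k, such that E[ξ_k⁴] ≤ c₁ (E[ξ_k²])² for all k ≥ 1. Then, with probability one, lim_{N→∞} (Σ_{k=1}^N ξ_k²)/(Σ_{k=1}^N E[ξ_k²]) = 1. -/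
/-!
Write `X k = ξ (k + 1) ^ 2`, `m k = 𝔼[X k]` and `b N = ∑_{k<N} m k`. From `k^(-α) m k → c` with
`α ≥ -1`, the partial sums `b N` diverge and `m N = O(b N / N)`; with `Var[X k] ≤ c₁ (m k)²` this
makes `∑ Var[X k] / (b k)²` finite. Along the indices `n j` at which `b` first reaches `ρ ^ j`,
Chebyshev's inequality and Borel–Cantelli give `S (n j) / b (n j) → 1` almost surely, where
`S N = ∑_{k<N} X k`. As `X k ≥ 0`, `S` is monotone, and `b (n (j + 1)) / b (n j) → ρ`; squeezing
`S N / b N` between consecutive indices and letting `ρ ↓ 1` gives the convergence along all `N`.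
-/

open MeasureTheory ProbabilityTheory Filter Finset Topology Asymptotics

lemma Finset.sum_Icc_one_eq_sum_range {M : Type*} [AddCommMonoid M] (f : ℕ → M) (N : ℕ) :
    ∑ k ∈ Icc 1 N, f k = ∑ k ∈ range N, f (k + 1) := by
  induction N with
  | zero => simp
  | succ N ih => rw [sum_Icc_succ_top (by omega), ih, sum_range_succ]

lemma Real.rpow_le_two_rpow_abs_mul_rpow {x y : ℝ} (hx : 0 < x) (hxy : x ≤ y) (hy : y ≤ 2 * x)
    (α : ℝ) : y ^ α ≤ 2 ^ |α| * x ^ α := by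
  have hyx : 1 ≤ y / x := (one_le_div hx).2 hxy
  calc y ^ α = (y / x) ^ α * x ^ α := by
        rw [← Real.mul_rpow (by positivity) hx.le, div_mul_cancel₀ _ hx.ne']
    _ ≤ (y / x) ^ |α| * x ^ α := by
        gcongr ?_ * _
        exact Real.rpow_le_rpow_of_exponent_le hyx (le_abs_self α)
    _ ≤ 2 ^ |α| * x ^ α := by
        gcongr
        exact (div_le_iff₀ hx).2 hy

section PowerGrowth

variable {M : ℕ → ℝ} {c α : ℝ}

lemma eventually_le_and_le_rpow_of_tendsto (hc : 0 < c)
    (hlim : Tendsto (fun k : ℕ => (k : ℝ) ^ (-α) * M k) atTop (𝓝 c)) :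
    ∀ᶠ k : ℕ in atTop, c / 2 * (k : ℝ) ^ α ≤ M k ∧ M k ≤ 2 * c * (k : ℝ) ^ α := by
  filter_upwards [hlim.eventually (Icc_mem_nhds (by linarith : c / 2 < c)
    (by linarith : c < 2 * c)), eventually_gt_atTop 0] with k ⟨hlo, hhi⟩ hk
  have hk : (0 : ℝ) < k := Nat.cast_pos.2 hk
  have hM : M k = (k : ℝ) ^ α * ((k : ℝ) ^ (-α) * M k) := by
    rw [← mul_assoc, ← Real.rpow_add hk, add_neg_cancel, Real.rpow_zero, one_mul]
  have hkα : 0 < (k : ℝ) ^ α := Real.rpow_pos_of_pos hk α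
  constructor
  · rw [hM, mul_comm (c / 2)]; gcongr
  · rw [hM, mul_comm (2 * c)]; gcongr

lemma tendsto_sum_range_atTop_of_tendsto_rpow_mul (hM : ∀ k, 0 ≤ M k) (hc : 0 < c)
    (hα : -1 ≤ α) (hlim : Tendsto (fun k : ℕ => (k : ℝ) ^ (-α) * M k) atTop (𝓝 c)) :
    Tendsto (fun N => ∑ k ∈ range N, M (k + 1)) atTop atTop := by
  refine (not_summable_iff_tendsto_nat_atTop_of_nonneg fun k => hM (k + 1)).1 fun hsum => ?_
  refine Real.not_summable_natCast_inv <|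
    (((summable_nat_add_iff 1).1 hsum).mul_left (2 / c)).of_norm_bounded_eventually_nat ?_
  filter_upwards [eventually_le_and_le_rpow_of_tendsto hc hlim, eventually_ge_atTop 1]
    with k ⟨hlo, _⟩ hk
  have hinv : (k : ℝ)⁻¹ ≤ (k : ℝ) ^ α := by
    simpa [Real.rpow_neg_one] using Real.rpow_le_rpow_of_exponent_le (Nat.one_le_cast.2 hk) hα
  rw [Real.norm_of_nonneg (inv_nonneg.2 (Nat.cast_nonneg k))]
  calc (k : ℝ)⁻¹ ≤ (k : ℝ) ^ α := hinv
    _ = 2 / c * (c / 2 * (k : ℝ) ^ α) := by field_simp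
    _ ≤ 2 / c * M k := by gcongr

lemma natCast_mul_le_sum_range_of_le_mul (hM : ∀ k, 0 ≤ M k) {K : ℝ} (hK : 0 ≤ K) {N : ℕ}
    (h : ∀ k ∈ Ico (N / 2) N, M (N + 1) ≤ K * M (k + 1)) :
    N * M (N + 1) ≤ 2 * K * ∑ k ∈ range N, M (k + 1) := by
  have hcard : (N : ℝ) ≤ 2 * (Ico (N / 2) N).card := by
    rw [Nat.card_Ico]; exact_mod_cast (by omega : N ≤ 2 * (N - N / 2))
  calc N * M (N + 1) ≤ 2 * ∑ _k ∈ Ico (N / 2) N, M (N + 1) := by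
        rw [sum_const, nsmul_eq_mul, ← mul_assoc]; gcongr; exact hM _
    _ ≤ 2 * ∑ k ∈ Ico (N / 2) N, K * M (k + 1) := by gcongr with k hk; exact h k hk
    _ ≤ 2 * K * ∑ k ∈ range N, M (k + 1) := by
        rw [← mul_sum, ← mul_assoc]
        gcongr
        · exact fun k _ _ => hM _
        · exact fun k hk => mem_range.2 (mem_Ico.1 hk).2

lemma isBigO_div_sum_range_of_tendsto_rpow_mul (hM : ∀ k, 0 ≤ M k) (hc : 0 < c)
    (hlim : Tendsto (fun k : ℕ => (k : ℝ) ^ (-α) * M k) atTop (𝓝 c)) :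
    (fun N => M (N + 1) / ∑ k ∈ range N, M (k + 1)) =O[atTop] fun N : ℕ => (N : ℝ)⁻¹ := by
  obtain ⟨K₀, hK₀⟩ := eventually_atTop.1 (eventually_le_and_le_rpow_of_tendsto hc hlim)
  set K : ℝ := 4 * 2 ^ |α|
  have hwindow : ∀ N ≥ 2 * K₀, ∀ k ∈ Ico (N / 2) N, M (N + 1) ≤ K * M (k + 1) := by
    intro N hN k hk
    rw [mem_Ico] at hk
    have hk1 : (0 : ℝ) < (k + 1 : ℕ) := by positivity
    calc M (N + 1) ≤ 2 * c * ((N + 1 : ℕ) : ℝ) ^ α := (hK₀ (N + 1) (by omega)).2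
      _ ≤ 2 * c * (2 ^ |α| * ((k + 1 : ℕ) : ℝ) ^ α) := by
          gcongr
          refine Real.rpow_le_two_rpow_abs_mul_rpow hk1 ?_ ?_ α <;> norm_cast <;> omega
      _ = K * (c / 2 * ((k + 1 : ℕ) : ℝ) ^ α) := by ring
      _ ≤ K * M (k + 1) := by gcongr; exact (hK₀ (k + 1) (by omega)).1
  refine IsBigO.of_bound (2 * K) ?_
  filter_upwards [eventually_ge_atTop (2 * K₀), eventually_gt_atTop 0] with N hN hN0
  have hB : 0 ≤ ∑ k ∈ range N, M (k + 1) := sum_nonneg fun k _ => hM _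
  have hN0 : (0 : ℝ) < N := Nat.cast_pos.2 hN0
  rw [Real.norm_of_nonneg (div_nonneg (hM _) hB), Real.norm_of_nonneg (inv_nonneg.2 hN0.le)]
  rcases hB.eq_or_lt with hB | hB
  · rw [← hB, div_zero]; positivity
  have := natCast_mul_le_sum_range_of_le_mul hM (by positivity) (hwindow N hN)
  rw [div_le_iff₀ hB, ← div_eq_mul_inv, div_mul_eq_mul_div, le_div_iff₀ hN0]
  linarith

end PowerGrowth

lemma Nat.exists_le_lt_succ_of_tendsto_atTop {n : ℕ → ℕ} (hn : Tendsto n atTop atTop)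
    {J N : ℕ} (hN : ∀ i ≤ J, n i ≤ N) : ∃ j ≥ J, n j ≤ N ∧ N < n (j + 1) := by
  classical
  have hex : ∃ i, N < n i := (hn.eventually_gt_atTop N).exists
  have hJ : J < Nat.find hex := by
    by_contra! h
    exact (Nat.find_spec hex).not_ge (hN _ h)
  refine ⟨Nat.find hex - 1, by omega, ?_, ?_⟩
  · exact not_lt.1 (Nat.find_min hex (by omega))
  · rw [Nat.sub_add_cancel (by omega)]; exact Nat.find_spec hex

/-- Mathlib's `tendsto_div_of_monotone_of_exists_subseq_tendsto_div` is the case `b n = n`. -/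
theorem tendsto_div_of_monotone_of_exists_subseq_tendsto_div' {u b : ℕ → ℝ} (hu : Monotone u)
    (hb : Monotone b) (hbtop : Tendsto b atTop atTop)
    (hlim : ∀ ε > 0, ∃ n : ℕ → ℕ, Tendsto n atTop atTop ∧
      (∀ᶠ j in atTop, b (n (j + 1)) ≤ (1 + ε) * b (n j)) ∧
      Tendsto (fun j => u (n j) / b (n j)) atTop (𝓝 1)) :
    Tendsto (fun N => u N / b N) atTop (𝓝 1) := by
  have key : ∀ ε ∈ Set.Ioc (0 : ℝ) 1, ∀ᶠ N in atTop, |u N / b N - 1| ≤ 3 * ε := by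
    rintro ε ⟨hε, hε1⟩
    obtain ⟨n, hn, hgrowth, hconv⟩ := hlim ε hε
    have hclose : ∀ᶠ j in atTop, |u (n j) / b (n j) - 1| ≤ ε := by
      filter_upwards [(Metric.tendsto_nhds.1 hconv) ε hε] with j hj
      exact hj.le
    obtain ⟨J, hJ⟩ := eventually_atTop.1
      (hgrowth.and (hclose.and (hn.eventually (hbtop.eventually_gt_atTop 0))))
    filter_upwards [eventually_ge_atTop ((range (J + 1)).sup n)] with N hN
    obtain ⟨j, hjJ, hjN, hNj⟩ := Nat.exists_le_lt_succ_of_tendsto_atTop hn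
      (fun i hi => (le_sup (mem_range.2 (Nat.lt_succ_of_le hi))).trans hN)
    obtain ⟨hgrow, hj, hbj⟩ := hJ j hjJ
    obtain ⟨-, hj1, hbj1⟩ := hJ (j + 1) (by omega)
    rw [abs_le, div_sub_one hbj.ne', le_div_iff₀ hbj, div_le_iff₀ hbj] at hj
    rw [abs_le, div_sub_one hbj1.ne', le_div_iff₀ hbj1, div_le_iff₀ hbj1] at hj1
    have hbN : b (n j) ≤ b N := hb hjN
    have hbN' : b N ≤ b (n (j + 1)) := hb hNj.le
    have huN : u (n j) ≤ u N := hu hjN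
    have huN' : u N ≤ u (n (j + 1)) := hu hNj.le
    have hbNpos : 0 < b N := hbj.trans_le hbN
    rw [abs_le, div_sub_one hbNpos.ne', le_div_iff₀ hbNpos, div_le_iff₀ hbNpos]
    -- `u N` lies between `u (n j)` and `u (n (j + 1))`, `b N` between `b (n j)` and
    -- `b (n (j + 1)) ≤ (1 + ε) b (n j)`.
    constructor <;> nlinarith
  refine Metric.tendsto_nhds.2 fun δ hδ => ?_
  filter_upwards [key (min (δ / 4) 1) ⟨by positivity, min_le_right _ _⟩] with N hN
  rw [Real.dist_eq]
  linarith [min_le_left (δ / 4) 1]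

/-- Junk value `0` if `b` never reaches `x`. -/
noncomputable def firstPassage (b : ℕ → ℝ) (x : ℝ) : ℕ := sInf {N | x ≤ b N}

section FirstPassage

variable {b : ℕ → ℝ}

lemma le_apply_firstPassage (hb : Tendsto b atTop atTop) (x : ℝ) : x ≤ b (firstPassage b x) :=
  Nat.sInf_mem (hb.eventually_ge_atTop x).exists

lemma apply_lt_of_lt_firstPassage {x : ℝ} {k : ℕ} (hk : k < firstPassage b x) : b k < x :=
  not_le.1 (Nat.notMem_of_lt_sInf hk)

lemma tendsto_firstPassage (hb : Monotone b) (hbtop : Tendsto b atTop atTop) :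
    Tendsto (firstPassage b) atTop atTop := by
  refine tendsto_atTop_atTop.2 fun K => ⟨b K + 1, fun x hx => ?_⟩
  by_contra! h
  linarith [le_apply_firstPassage hbtop x, hb h.le]

lemma tendsto_apply_firstPassage_div (hb : Monotone b) (hbtop : Tendsto b atTop atTop)
    (hratio : Tendsto (fun N => b (N + 1) / b N) atTop (𝓝 1)) :
    Tendsto (fun x => b (firstPassage b x) / x) atTop (𝓝 1) := by
  have hprev : Tendsto (fun x => firstPassage b x - 1) atTop atTop :=
    (tendsto_sub_atTop_nat 1).comp (tendsto_firstPassage hb hbtop)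
  refine tendsto_of_tendsto_of_tendsto_of_le_of_le' tendsto_const_nhds (hratio.comp hprev) ?_ ?_
  · filter_upwards [eventually_gt_atTop 0] with x hx
    exact (one_le_div hx).2 (le_apply_firstPassage hbtop x)
  · filter_upwards [hprev.eventually (hbtop.eventually_gt_atTop 0),
      (tendsto_firstPassage hb hbtop).eventually_gt_atTop 0] with x hpos hfp
    have hlt : b (firstPassage b x - 1) < x := apply_lt_of_lt_firstPassage (by omega)
    simp only [Function.comp_apply, Nat.sub_add_cancel hfp]
    gcongr
    exact hpos.le.trans (hb (Nat.sub_le _ _))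

lemma tendsto_firstPassage_pow_succ_div (hb : Monotone b) (hbtop : Tendsto b atTop atTop)
    (hratio : Tendsto (fun N => b (N + 1) / b N) atTop (𝓝 1)) {ρ : ℝ} (hρ : 1 < ρ) :
    Tendsto (fun j : ℕ => b (firstPassage b (ρ ^ (j + 1))) / b (firstPassage b (ρ ^ j)))
      atTop (𝓝 ρ) := by
  have h := (tendsto_apply_firstPassage_div hb hbtop hratio).comp
    (tendsto_pow_atTop_atTop_of_one_lt hρ)
  have := ((h.comp (tendsto_add_atTop_nat 1)).div h one_ne_zero).mul_const ρ
  rw [div_one, one_mul] at this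
  refine this.congr fun j => ?_
  have hpos : 0 < b (firstPassage b (ρ ^ j)) :=
    (pow_pos (by linarith) j).trans_le (le_apply_firstPassage hbtop _)
  have hρj : ρ ^ j ≠ 0 := (pow_pos (by linarith) j).ne'
  simp only [Pi.div_apply, Function.comp_apply]
  field_simp
  ring

lemma sum_filter_lt_firstPassage_le {ρ : ℝ} (hρ : 1 < ρ) (k N : ℕ) :
    ∑ j ∈ range N with k < firstPassage b (ρ ^ j), 1 / (ρ ^ j) ^ 2 ≤
      ρ ^ 5 * (ρ - 1)⁻¹ / max (b k) 1 ^ 2 := by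
  have hρ0 : 0 < ρ := by linarith
  calc ∑ j ∈ range N with k < firstPassage b (ρ ^ j), 1 / (ρ ^ j) ^ 2
      ≤ ∑ j ∈ range N with max (b k) 1 / ρ < ρ ^ j, 1 / (ρ ^ j) ^ 2 := by
        refine sum_le_sum_of_subset_of_nonneg (fun j => ?_) fun _ _ _ => by positivity
        simp only [mem_filter]
        refine fun ⟨hjN, hj⟩ => ⟨hjN, ?_⟩
        have h1 : 1 ≤ ρ ^ j := one_le_pow₀ hρ.le
        have h2 := apply_lt_of_lt_firstPassage hj
        rw [div_lt_iff₀ hρ0]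
        apply max_lt <;> nlinarith
    _ ≤ ρ ^ 3 * (ρ - 1)⁻¹ / (max (b k) 1 / ρ) ^ 2 :=
        sum_div_pow_sq_le_div_sq N (by positivity) hρ
    _ = ρ ^ 5 * (ρ - 1)⁻¹ / max (b k) 1 ^ 2 := by field_simp

/-- The weight `max (b k) 1` rather than `b k` keeps the first terms, where `b` may vanish, from
becoming junk. -/
lemma summable_sum_range_firstPassage_div_sq (hbtop : Tendsto b atTop atTop) {ρ : ℝ}
    (hρ : 1 < ρ) {v : ℕ → ℝ} (hv : ∀ k, 0 ≤ v k)
    (hsum : Summable fun k => v k / max (b k) 1 ^ 2) :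
    Summable fun j : ℕ =>
      (∑ k ∈ range (firstPassage b (ρ ^ j)), v k) / b (firstPassage b (ρ ^ j)) ^ 2 := by
  set n : ℕ → ℕ := fun j => firstPassage b (ρ ^ j)
  have hρ0 : 0 < ρ := by linarith
  refine summable_of_sum_range_le (c := ρ ^ 5 * (ρ - 1)⁻¹ * ∑' k, v k / max (b k) 1 ^ 2)
    (fun j => div_nonneg (sum_nonneg fun k _ => hv k) (sq_nonneg _)) fun N => ?_
  set K := (range N).sup n
  have hK : ∀ j ∈ range N, range (n j) = (range K).filter (· < n j) := by
    intro j hj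
    ext k
    simp only [mem_range, mem_filter]
    exact ⟨fun hk => ⟨hk.trans_le (le_sup hj), hk⟩, And.right⟩
  calc ∑ j ∈ range N, (∑ k ∈ range (n j), v k) / b (n j) ^ 2
      ≤ ∑ j ∈ range N, 1 / (ρ ^ j) ^ 2 * ∑ k ∈ range (n j), v k := by
        gcongr with j
        rw [div_eq_mul_one_div, mul_comm]
        gcongr
        · exact sum_nonneg fun k _ => hv k
        · exact le_apply_firstPassage hbtop _
    _ = ∑ j ∈ range N, ∑ k ∈ range K, if k < n j then 1 / (ρ ^ j) ^ 2 * v k else 0 := by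
        refine sum_congr rfl fun j hj => ?_
        rw [hK j hj, sum_filter, mul_sum]
        simp only [mul_ite, mul_zero]
    _ = ∑ k ∈ range K, (∑ j ∈ range N with k < n j, 1 / (ρ ^ j) ^ 2) * v k := by
        rw [sum_comm]
        simp only [sum_filter, sum_mul, ite_mul, zero_mul]
    _ ≤ ∑ k ∈ range K, ρ ^ 5 * (ρ - 1)⁻¹ / max (b k) 1 ^ 2 * v k := by
        gcongr with k
        exacts [hv k, sum_filter_lt_firstPassage_le hρ k N]
    _ = ρ ^ 5 * (ρ - 1)⁻¹ * ∑ k ∈ range K, v k / max (b k) 1 ^ 2 := by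
        rw [mul_sum]
        exact sum_congr rfl fun k _ => by ring
    _ ≤ ρ ^ 5 * (ρ - 1)⁻¹ * ∑' k, v k / max (b k) 1 ^ 2 := by
        gcongr
        exact hsum.sum_le_tsum _ fun k _ => by have := hv k; positivity

end FirstPassage

lemma ae_tendsto_div_integral_of_summable_variance_div_sq {Ω : Type*} [MeasurableSpace Ω]
    {P : Measure Ω} [IsFiniteMeasure P] {Y : ℕ → Ω → ℝ} (hY : ∀ j, MemLp (Y j) 2 P)
    (hpos : ∀ j, 0 < P[Y j]) (hsum : Summable fun j => variance (Y j) P / P[Y j] ^ 2) :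
    ∀ᵐ ω ∂P, Tendsto (fun j => Y j ω / P[Y j]) atTop (𝓝 1) := by
  have hdev : ∀ ε > 0, ∀ᵐ ω ∂P, ∀ᶠ j in atTop, |Y j ω - P[Y j]| < ε * P[Y j] := by
    intro ε hε
    have hcheb : ∀ j, P {ω | ε * P[Y j] ≤ |Y j ω - P[Y j]|} ≤
        ENNReal.ofReal (ε⁻¹ ^ 2 * (variance (Y j) P / P[Y j] ^ 2)) := fun j => by
      refine (meas_ge_le_variance_div_sq (hY j) (mul_pos hε (hpos j))).trans_eq ?_
      congr 1
      field_simp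
    have hfin : ∑' j, P {ω | ε * P[Y j] ≤ |Y j ω - P[Y j]|} ≠ ⊤ := by
      refine ne_top_of_le_ne_top ENNReal.ofReal_ne_top ((ENNReal.tsum_le_tsum hcheb).trans_eq
        (ENNReal.ofReal_tsum_of_nonneg (fun j => ?_) (hsum.mul_left (ε⁻¹ ^ 2))).symm)
      have := variance_nonneg (Y j) P
      positivity
    filter_upwards [ae_eventually_notMem hfin] with ω hω
    simpa using hω
  filter_upwards [ae_all_iff.2 fun i : ℕ => hdev (1 / (i + 1)) Nat.one_div_pos_of_nat] with ω hω
  refine Metric.tendsto_nhds.2 fun δ hδ => ?_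
  obtain ⟨i, hi⟩ := exists_nat_one_div_lt hδ
  filter_upwards [hω i] with j hj
  rw [Real.dist_eq, div_sub_one (hpos j).ne', abs_div, abs_of_pos (hpos j), div_lt_iff₀ (hpos j)]
  exact hj.trans (mul_lt_mul_of_pos_right hi (hpos j))

theorem ae_tendsto_sum_range_div_sum_range_integral {Ω : Type*} [MeasurableSpace Ω]
    {P : Measure Ω} [IsFiniteMeasure P] {X : ℕ → Ω → ℝ} (hX : ∀ k ω, 0 ≤ X k ω)
    (hL2 : ∀ k, MemLp (X k) 2 P) (hindep : Pairwise fun i j => IndepFun (X i) (X j) P)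
    (htop : Tendsto (fun N => ∑ k ∈ range N, P[X k]) atTop atTop)
    (hinc : Tendsto (fun N => P[X N] / ∑ k ∈ range N, P[X k]) atTop (𝓝 0))
    (hvar : Summable fun k => variance (X k) P / max (∑ i ∈ range k, P[X i]) 1 ^ 2) :
    ∀ᵐ ω ∂P,
      Tendsto (fun N => (∑ k ∈ range N, X k ω) / ∑ k ∈ range N, P[X k]) atTop (𝓝 1) := by
  set b : ℕ → ℝ := fun N => ∑ k ∈ range N, P[X k]
  have hb : Monotone b := monotone_nat_of_le_succ fun N => by
    simpa [b, sum_range_succ] using integral_nonneg (hX N)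
  have hratio : Tendsto (fun N => b (N + 1) / b N) atTop (𝓝 1) := by
    rw [← add_zero (1 : ℝ)]
    refine (tendsto_const_nhds.add hinc).congr' ?_
    filter_upwards [htop.eventually_gt_atTop 0] with N hN
    simp only [b, sum_range_succ, add_div, div_self hN.ne']
  have hS_mean : ∀ N, P[∑ k ∈ range N, X k] = b N := fun N => by
    simp only [Finset.sum_apply]
    exact integral_finsetSum _ fun k _ => (hL2 k).integrable one_le_two
  have hS_var : ∀ N, variance (∑ k ∈ range N, X k) P = ∑ k ∈ range N, variance (X k) P :=
    fun N => IndepFun.variance_sum (fun k _ => hL2 k) fun i _ j _ hij => hindep hij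
  have hsub : ∀ ρ > 1, ∀ᵐ ω ∂P, Tendsto (fun j => (∑ k ∈ range (firstPassage b (ρ ^ j)), X k ω) /
      b (firstPassage b (ρ ^ j))) atTop (𝓝 1) := by
    intro ρ hρ
    have hpos : ∀ j, 0 < P[∑ k ∈ range (firstPassage b (ρ ^ j)), X k] := fun j =>
      hS_mean _ ▸ (pow_pos (by linarith) j).trans_le (le_apply_firstPassage htop _)
    have := ae_tendsto_div_integral_of_summable_variance_div_sq
      (fun j => memLp_finsetSum' _ fun k _ => hL2 k) hpos (by
        simpa only [hS_mean, hS_var] using summable_sum_range_firstPassage_div_sq htop hρ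
          (fun k => variance_nonneg _ _) hvar)
    simp only [hS_mean] at this
    simpa only [Finset.sum_apply] using this
  filter_upwards [ae_all_iff.2 fun i : ℕ => hsub (1 + 1 / (i + 1))
    (lt_add_of_pos_right _ Nat.one_div_pos_of_nat)]
    with ω hω
  have hu : Monotone fun N => ∑ k ∈ range N, X k ω := monotone_nat_of_le_succ fun N => by
    simpa [sum_range_succ] using hX N ω
  refine tendsto_div_of_monotone_of_exists_subseq_tendsto_div' hu hb htop fun ε hε => ?_
  obtain ⟨i, hi⟩ := exists_nat_one_div_lt hε
  set ρ : ℝ := 1 + 1 / ((i : ℝ) + 1)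
  have hρ : 1 < ρ := lt_add_of_pos_right _ Nat.one_div_pos_of_nat
  refine ⟨fun j => firstPassage b (ρ ^ j),
    (tendsto_firstPassage hb htop).comp (tendsto_pow_atTop_atTop_of_one_lt hρ), ?_, hω i⟩
  filter_upwards [(tendsto_firstPassage_pow_succ_div hb htop hratio hρ).eventually
    (gt_mem_nhds (by linarith : ρ < 1 + ε))] with j hj
  have hpos : 0 < b (firstPassage b (ρ ^ j)) :=
    (pow_pos (by linarith) j).trans_le (le_apply_firstPassage htop _)
  exact ((div_lt_iff₀ hpos).1 hj).le

theorem slln_squares_ratio_tendsto_one_general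
    {Ω : Type*} [MeasurableSpace Ω] (P : Measure Ω) [IsProbabilityMeasure P]
    (ξ : ℕ → Ω → ℝ)
    (hindep : iIndepFun ξ P)
    (hsq : ∀ k, 1 ≤ k → Integrable (fun ω => (ξ k ω) ^ 2) P)
    (hfour : ∀ k, 1 ≤ k → Integrable (fun ω => (ξ k ω) ^ 4) P)
    (c α : ℝ) (hc : 0 < c) (hα : -1 ≤ α)
    (hlim : Tendsto (fun k : ℕ => (k : ℝ) ^ (-α) * ∫ ω, (ξ k ω) ^ 2 ∂P)
      atTop (nhds c))
    (c₁ : ℝ)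
    (hmom4 : ∀ k, 1 ≤ k →
      ∫ ω, (ξ k ω) ^ 4 ∂P ≤ c₁ * (∫ ω, (ξ k ω) ^ 2 ∂P) ^ 2) :
    ∀ᵐ ω ∂P, Tendsto
      (fun N : ℕ => (∑ k ∈ Finset.Icc 1 N, (ξ k ω) ^ 2) /
        (∑ k ∈ Finset.Icc 1 N, ∫ ω', (ξ k ω') ^ 2 ∂P))
      atTop (nhds 1) := by
  set M : ℕ → ℝ := fun k => ∫ ω, ξ k ω ^ 2 ∂P
  set b : ℕ → ℝ := fun N => ∑ k ∈ range N, M (k + 1)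
  have hM : ∀ k, 0 ≤ M k := fun k => integral_nonneg fun ω => sq_nonneg _
  have hL2 : ∀ k, MemLp (fun ω => ξ (k + 1) ω ^ 2) 2 P := fun k =>
    (memLp_two_iff_integrable_sq (hsq (k + 1) (by omega)).aestronglyMeasurable).2 (by
      simpa only [← pow_mul] using hfour (k + 1) (by omega))
  have hvar (k : ℕ) : variance (fun ω => ξ (k + 1) ω ^ 2) P ≤ c₁ * M (k + 1) ^ 2 := by
    rw [variance_eq_sub (hL2 k)]
    simp only [Pi.pow_apply, ← pow_mul]
    linarith [hmom4 (k + 1) (by omega), sq_nonneg (M (k + 1))]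
  have htop : Tendsto b atTop atTop := tendsto_sum_range_atTop_of_tendsto_rpow_mul hM hc hα hlim
  have hO := isBigO_div_sum_range_of_tendsto_rpow_mul hM hc hlim
  have hvar_sum : Summable fun k => variance (fun ω => ξ (k + 1) ω ^ 2) P / max (b k) 1 ^ 2 := by
    refine ((summable_of_isBigO_nat (Real.summable_nat_pow_inv.2 one_lt_two)
      (by simpa only [inv_pow] using hO.pow 2)).mul_left c₁).of_norm_bounded_eventually_nat ?_
    filter_upwards [htop.eventually_ge_atTop 1] with k hk
    have := variance_nonneg (fun ω => ξ (k + 1) ω ^ 2) P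
    rw [Real.norm_of_nonneg (by positivity), max_eq_left hk, div_pow, ← mul_div_assoc]
    gcongr
    exact hvar k
  have := ae_tendsto_sum_range_div_sum_range_integral (fun k ω => sq_nonneg (ξ (k + 1) ω)) hL2
    (fun i j hij => (hindep.indepFun (by omega : i + 1 ≠ j + 1)).comp
      (measurable_id.pow_const 2) (measurable_id.pow_const 2))
    htop (hO.trans_tendsto tendsto_inv_atTop_nhds_zero_nat) hvar_sum
  simpa only [sum_Icc_one_eq_sum_range] using this

/-- Strong Law of Large Numbers (Shiryaev, Theorem IV.3.2, second part):
for independent centered random variables `ξ_k` with positive second moments whose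
second moments satisfy `k^{-α} E[ξ_k²] → c` for some `c > 0` and `α ≥ -1`, and whose
fourth moments satisfy `E[ξ_k⁴] ≤ c₁ (E[ξ_k²])²` for a constant `c₁ > 0`, the
ratios `(∑_{k=1}^N ξ_k²)/(∑_{k=1}^N E[ξ_k²])` tend to `1` almost surely. -/
theorem slln_squares_ratio_tendsto_one
    {Ω : Type*} [MeasurableSpace Ω] (P : Measure Ω) [IsProbabilityMeasure P]
    (ξ : ℕ → Ω → ℝ) (hmeas : ∀ k, Measurable (ξ k))
    (hindep : iIndepFun ξ P)
    (hint : ∀ k, 1 ≤ k → Integrable (ξ k) P)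
    (hsq : ∀ k, 1 ≤ k → Integrable (fun ω => (ξ k ω) ^ 2) P)
    (hfour : ∀ k, 1 ≤ k → Integrable (fun ω => (ξ k ω) ^ 4) P)
    (hmean : ∀ k, 1 ≤ k → ∫ ω, ξ k ω ∂P = 0)
    (hvarpos : ∀ k, 1 ≤ k → 0 < ∫ ω, (ξ k ω) ^ 2 ∂P)
    (c α : ℝ) (hc : 0 < c) (hα : -1 ≤ α)
    (hlim : Tendsto (fun k : ℕ => (k : ℝ) ^ (-α) * ∫ ω, (ξ k ω) ^ 2 ∂P)
      atTop (nhds c))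
    (c₁ : ℝ) (hc₁ : 0 < c₁)
    (hmom4 : ∀ k, 1 ≤ k →
      ∫ ω, (ξ k ω) ^ 4 ∂P ≤ c₁ * (∫ ω, (ξ k ω) ^ 2 ∂P) ^ 2) :
    ∀ᵐ ω ∂P, Tendsto
      (fun N : ℕ => (∑ k ∈ Finset.Icc 1 N, (ξ k ω) ^ 2) /
        (∑ k ∈ Finset.Icc 1 N, ∫ ω', (ξ k ω') ^ 2 ∂P))
      atTop (nhds 1) :=
  slln_squares_ratio_tendsto_one_general P ξ hindep hsq hfour c α hc hα hlim c₁ hmom4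
end

section
/- Let T > 0 and let S, E, I_a, I_s : [0,T] → ℝ be continuous functions satisfying the growth-phase hypotheses: for all t ∈ [0,T], 0 < S(T) ≤ S(t) ≤ S(0) < 1, 0 < E(0) ≤ E(t) < 1, 0 < I_a(0) ≤ I_a(t) ≤ 1, and 0 < I_s(0) ≤ I_s(t) ≤ 1. Set A := 1/(1−S(0))² + 1/E(0)² and B := S(T)⁴ · I_s(0)² · I_a(0)². Define J_s(T) := ∫₀^T [ (S(t) I_s(t)/(1−S(t)))² + (S(t) I_s(t)/E(t))² ] dt, J_a(T) := ∫₀^T [ (S(t) I_a(t)/(1−S(t)))² + (S(t) I_a(t)/E(t))² ] dt, and J_{sa}(T) := ∫₀^T I_a(t) I_s(t) [ (S(t)/(1−S(t)))² + (S(t)/E(t))² ] dt. Then 4T² (A² − B) > J_a(T) J_s(T) − J_{sa}(T)² > 4T² (B − A²). -/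
open scoped Real

private lemma int_bounds {f : ℝ → ℝ} {T c C : ℝ} (hT : 0 ≤ T)
    (hf : ContinuousOn f (Set.Icc 0 T))
    (hc : ∀ t ∈ Set.Icc (0:ℝ) T, c ≤ f t)
    (hC : ∀ t ∈ Set.Icc (0:ℝ) T, f t ≤ C) :
    c * T ≤ (∫ t in (0:ℝ)..T, f t) ∧ (∫ t in (0:ℝ)..T, f t) ≤ C * T := by
  have huIcc : Set.uIcc (0:ℝ) T = Set.Icc 0 T := Set.uIcc_of_le hT
  have hint : IntervalIntegrable f MeasureTheory.volume 0 T := by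
    apply ContinuousOn.intervalIntegrable; rwa [huIcc]
  constructor
  · have := intervalIntegral.integral_mono_on hT intervalIntegrable_const hint hc
    simpa [intervalIntegral.integral_const, smul_eq_mul, mul_comm] using this
  · have := intervalIntegral.integral_mono_on hT hint intervalIntegrable_const hC
    simpa [intervalIntegral.integral_const, smul_eq_mul, mul_comm] using this

private lemma sq_div_bounds {m x d d0 : ℝ} (hm : 0 ≤ m) (hmx : m ≤ x) (hx1 : x ≤ 1)
    (hd0 : 0 < d0) (hd0d : d0 ≤ d) (hd1 : d ≤ 1) :
    m ^ 2 ≤ (x / d) ^ 2 ∧ (x / d) ^ 2 ≤ 1 / d0 ^ 2 := by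
  have hd : 0 < d := lt_of_lt_of_le hd0 hd0d
  have hx0 : 0 ≤ x := le_trans hm hmx
  rw [div_pow]
  constructor
  · calc m ^ 2 = m ^ 2 / 1 := by ring
      _ ≤ x ^ 2 / d ^ 2 := by
        apply div_le_div₀ (sq_nonneg x) (pow_le_pow_left₀ hm hmx 2) (by positivity)
        nlinarith
  · apply div_le_div₀ (by norm_num) (by nlinarith) (by positivity)
    apply pow_le_pow_left₀ hd0.le hd0d

set_option maxHeartbeats 1000000 in
/-- Two-sided bound on the determinant `J_a(T) J_s(T) - J_{sa}(T)²` of the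
normal-equations matrix arising in the MLE of the transmission rates of the
stochastic SEIR model, under the growth-phase hypotheses:
`4T²(A² - B) > J_a J_s - J_{sa}² > 4T²(B - A²)` where
`A = 1/(1-S(0))² + 1/E(0)²` and `B = S(T)⁴ I_s(0)² I_a(0)²`. -/
theorem det_normal_equations_bounds
    (T : ℝ) (hT : 0 < T) (S E Ia Is : ℝ → ℝ)
    (hScont : ContinuousOn S (Set.Icc 0 T))
    (hEcont : ContinuousOn E (Set.Icc 0 T))
    (hIacont : ContinuousOn Ia (Set.Icc 0 T))
    (hIscont : ContinuousOn Is (Set.Icc 0 T))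
    (hST : 0 < S T) (hS0 : S 0 < 1)
    (hSmono : ∀ t ∈ Set.Icc (0:ℝ) T, S T ≤ S t ∧ S t ≤ S 0)
    (hE0 : 0 < E 0) (hE : ∀ t ∈ Set.Icc (0:ℝ) T, E 0 ≤ E t ∧ E t < 1)
    (hIa0 : 0 < Ia 0) (hIa : ∀ t ∈ Set.Icc (0:ℝ) T, Ia 0 ≤ Ia t ∧ Ia t ≤ 1)
    (hIs0 : 0 < Is 0) (hIs : ∀ t ∈ Set.Icc (0:ℝ) T, Is 0 ≤ Is t ∧ Is t ≤ 1)
    (A B Js Ja Jsa : ℝ)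
    (hA : A = 1 / (1 - S 0) ^ 2 + 1 / (E 0) ^ 2)
    (hB : B = (S T) ^ 4 * (Is 0) ^ 2 * (Ia 0) ^ 2)
    (hJs : Js = ∫ t in (0:ℝ)..T,
        ((S t * Is t / (1 - S t)) ^ 2 + (S t * Is t / E t) ^ 2))
    (hJa : Ja = ∫ t in (0:ℝ)..T,
        ((S t * Ia t / (1 - S t)) ^ 2 + (S t * Ia t / E t) ^ 2))
    (hJsa : Jsa = ∫ t in (0:ℝ)..T,
        Ia t * Is t * ((S t / (1 - S t)) ^ 2 + (S t / E t) ^ 2)) :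
    4 * T ^ 2 * (A ^ 2 - B) > Ja * Js - Jsa ^ 2 ∧
      Ja * Js - Jsa ^ 2 > 4 * T ^ 2 * (B - A ^ 2) := by
  -- basic positivity facts
  have hS0pos : 0 < S 0 := lt_of_lt_of_le hST (hSmono 0 ⟨le_refl 0, hT.le⟩).1
  have hST1 : S T < 1 := lt_of_le_of_lt (hSmono T ⟨hT.le, le_refl T⟩).2 hS0
  have hE01 : E 0 < 1 := (hE 0 ⟨le_refl 0, hT.le⟩).2
  have hIa01 : Ia 0 ≤ 1 := (hIa 0 ⟨le_refl 0, hT.le⟩).2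
  have hIs01 : Is 0 ≤ 1 := (hIs 0 ⟨le_refl 0, hT.le⟩).2
  -- continuity helpers
  have hSne : ∀ t ∈ Set.Icc (0:ℝ) T, (1 - S t) ≠ 0 := fun t ht => by
    have := (hSmono t ht).2; nlinarith
  have hEne : ∀ t ∈ Set.Icc (0:ℝ) T, E t ≠ 0 := fun t ht =>
    ne_of_gt (lt_of_lt_of_le hE0 (hE t ht).1)
  have hc1 : ContinuousOn (fun t => 1 - S t) (Set.Icc 0 T) := continuousOn_const.sub hScont
  -- pointwise facts at each t
  have key : ∀ (X : ℝ → ℝ), ContinuousOn X (Set.Icc 0 T) → 0 < X 0 →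
      (∀ t ∈ Set.Icc (0:ℝ) T, X 0 ≤ X t ∧ X t ≤ 1) →
      ((S T * X 0) ^ 2 * T ≤ (∫ t in (0:ℝ)..T,
          ((S t * X t / (1 - S t)) ^ 2 + (S t * X t / E t) ^ 2)) ∧
        (∫ t in (0:ℝ)..T, ((S t * X t / (1 - S t)) ^ 2 + (S t * X t / E t) ^ 2)) ≤ A * T) := by
    intro X hXc hX0 hX
    have hfc : ContinuousOn
        (fun t => (S t * X t / (1 - S t)) ^ 2 + (S t * X t / E t) ^ 2) (Set.Icc 0 T) :=
      (((hScont.mul hXc).div hc1 hSne).pow 2).add (((hScont.mul hXc).div hEcont hEne).pow 2)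
    have common : ∀ t ∈ Set.Icc (0:ℝ) T,
        (S T * X 0) ^ 2 ≤ (S t * X t / (1 - S t)) ^ 2 ∧
          (S t * X t / (1 - S t)) ^ 2 ≤ 1 / (1 - S 0) ^ 2 ∧
          (S t * X t / E t) ^ 2 ≤ 1 / (E 0) ^ 2 := by
      intro t ht
      obtain ⟨hSl, hSu⟩ := hSmono t ht
      obtain ⟨hXl, hXu⟩ := hX t ht
      obtain ⟨hEl, hEu⟩ := hE t ht
      have hSt0 : 0 < S t := lt_of_lt_of_le hST hSl
      have hX0t : 0 < X t := lt_of_lt_of_le hX0 hXl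
      have hm : 0 ≤ S T * X 0 := by positivity
      have hmx : S T * X 0 ≤ S t * X t := mul_le_mul hSl hXl hX0.le hSt0.le
      have hSt1 : S t < 1 := lt_of_le_of_lt hSu hS0
      have hx1 : S t * X t ≤ 1 := by nlinarith
      have h1 := sq_div_bounds hm hmx hx1 (by linarith : (0:ℝ) < 1 - S 0)
        (by linarith : 1 - S 0 ≤ 1 - S t) (by linarith : 1 - S t ≤ 1)
      have h2 := sq_div_bounds hm hmx hx1 hE0 hEl hEu.le
      exact ⟨h1.1, h1.2, h2.2⟩
    apply int_bounds hT.le hfc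
    · intro t ht
      have h := common t ht
      have := sq_nonneg (S t * X t / E t)
      linarith [h.1]
    · intro t ht
      have h := common t ht
      rw [hA]; linarith [h.2.1, h.2.2]
  have hJsB := key Is hIscont hIs0 hIs
  have hJaB := key Ia hIacont hIa0 hIa
  rw [← hJs] at hJsB
  rw [← hJa] at hJaB
  -- bounds for Jsa
  have hJsaB : (Ia 0 * Is 0 * (S T) ^ 2) * T ≤ Jsa ∧ Jsa ≤ A * T := by
    rw [hJsa]
    have hfc : ContinuousOn
        (fun t => Ia t * Is t * ((S t / (1 - S t)) ^ 2 + (S t / E t) ^ 2)) (Set.Icc 0 T) :=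
      (hIacont.mul hIscont).mul
        (((hScont.div hc1 hSne).pow 2).add ((hScont.div hEcont hEne).pow 2))
    have common : ∀ t ∈ Set.Icc (0:ℝ) T,
        (S T) ^ 2 ≤ (S t / (1 - S t)) ^ 2 ∧
          (S t / (1 - S t)) ^ 2 ≤ 1 / (1 - S 0) ^ 2 ∧
          (S t / E t) ^ 2 ≤ 1 / (E 0) ^ 2 := by
      intro t ht
      obtain ⟨hSl, hSu⟩ := hSmono t ht
      obtain ⟨hEl, hEu⟩ := hE t ht
      have hSt1 : S t < 1 := lt_of_le_of_lt hSu hS0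
      have h1 := sq_div_bounds hST.le hSl hSt1.le (by linarith : (0:ℝ) < 1 - S 0)
        (by linarith : 1 - S 0 ≤ 1 - S t) (by linarith [lt_of_lt_of_le hST hSl] : 1 - S t ≤ 1)
      have h2 := sq_div_bounds hST.le hSl hSt1.le hE0 hEl hEu.le
      exact ⟨h1.1, h1.2, h2.2⟩
    apply int_bounds hT.le hfc
    · intro t ht
      have h := common t ht
      have hIat := hIa t ht; have hIst := hIs t ht
      have hprod : Ia 0 * Is 0 ≤ Ia t * Is t :=
        mul_le_mul hIat.1 hIst.1 hIs0.le (le_trans hIa0.le hIat.1)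
      have hbrlo : (S T) ^ 2 ≤ (S t / (1 - S t)) ^ 2 + (S t / E t) ^ 2 := by
        have := sq_nonneg (S t / E t); linarith [h.1]
      exact mul_le_mul hprod hbrlo (sq_nonneg _) (le_trans (mul_pos hIa0 hIs0).le hprod)
    · intro t ht
      have h := common t ht
      have hIat := hIa t ht; have hIst := hIs t ht
      have hprod1 : Ia t * Is t ≤ 1 := by
        simpa using mul_le_mul hIat.2 hIst.2 (le_trans hIs0.le hIst.1) zero_le_one
      have hbr : (S t / (1 - S t)) ^ 2 + (S t / E t) ^ 2 ≤ A := by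
        rw [hA]; linarith [h.2.1, h.2.2]
      have hbr0 : (0:ℝ) ≤ (S t / (1 - S t)) ^ 2 + (S t / E t) ^ 2 := by positivity
      calc Ia t * Is t * ((S t / (1 - S t)) ^ 2 + (S t / E t) ^ 2)
          ≤ 1 * A := mul_le_mul hprod1 hbr hbr0 (by norm_num)
        _ = A := one_mul A
  -- global facts
  clear key hJs hJa hJsa hScont hEcont hIacont hIscont hSne hEne hc1 hE hIa hIs hSmono
  have hA1 : 1 < A := by
    rw [hA]
    have h1 : (1:ℝ) < 1 / (1 - S 0) ^ 2 := by
      rw [lt_div_iff₀ (by nlinarith)]; nlinarith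
    have h2 : (0:ℝ) < 1 / (E 0) ^ 2 := by positivity
    linarith
  have hB1 : B < 1 := by
    rw [hB]
    have e1 : Is 0 ^ 2 ≤ 1 := pow_le_one₀ hIs0.le hIs01
    have e2 : Ia 0 ^ 2 ≤ 1 := pow_le_one₀ hIa0.le hIa01
    have e3 : (0:ℝ) < S T ^ 4 := by positivity
    have e4 : S T ^ 4 < 1 := pow_lt_one₀ hST.le hST1 (by norm_num)
    calc S T ^ 4 * Is 0 ^ 2 * Ia 0 ^ 2 ≤ S T ^ 4 * 1 * 1 := by
          apply mul_le_mul (mul_le_mul le_rfl e1 (sq_nonneg _) e3.le) e2 (sq_nonneg _)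
          nlinarith
      _ = S T ^ 4 := by ring
      _ < 1 := e4
  have hBpos : 0 < B := by rw [hB]; positivity
  -- combine
  obtain ⟨hJsl, hJsu⟩ := hJsB
  obtain ⟨hJal, hJau⟩ := hJaB
  obtain ⟨hJsal, hJsau⟩ := hJsaB
  have hJspos : 0 < Js := lt_of_lt_of_le (by positivity) hJsl
  have hJapos : 0 < Ja := lt_of_lt_of_le (by positivity) hJal
  have hJsapos : 0 < Jsa := lt_of_lt_of_le (by positivity) hJsal
  have hJaJs_lo : B * T ^ 2 ≤ Ja * Js := by
    have := mul_le_mul hJal hJsl (by positivity) hJapos.le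
    calc B * T ^ 2 = ((S T * Ia 0) ^ 2 * T) * ((S T * Is 0) ^ 2 * T) := by rw [hB]; ring
      _ ≤ Ja * Js := this
  have hJaJs_hi : Ja * Js ≤ A ^ 2 * T ^ 2 := by
    have := mul_le_mul hJau hJsu hJspos.le (by nlinarith)
    calc Ja * Js ≤ (A * T) * (A * T) := this
      _ = A ^ 2 * T ^ 2 := by ring
  have hJsa_hi : Jsa ^ 2 ≤ A ^ 2 * T ^ 2 := by
    have := mul_le_mul hJsau hJsau hJsapos.le (by nlinarith)
    calc Jsa ^ 2 = Jsa * Jsa := sq Jsa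
      _ ≤ (A * T) * (A * T) := this
      _ = A ^ 2 * T ^ 2 := by ring
  have hJsa_lo : B * T ^ 2 ≤ Jsa ^ 2 := by
    have hm : 0 ≤ (Ia 0 * Is 0 * (S T) ^ 2) * T := by positivity
    have := mul_le_mul hJsal hJsal hm hJsapos.le
    calc B * T ^ 2 = ((Ia 0 * Is 0 * (S T) ^ 2) * T) * ((Ia 0 * Is 0 * (S T) ^ 2) * T) := by
          rw [hB]; ring
      _ ≤ Jsa * Jsa := this
      _ = Jsa ^ 2 := (sq Jsa).symm
  have hAB : 0 < A ^ 2 - B := by nlinarith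
  have hT2 : 0 < T ^ 2 := by positivity
  constructor
  · nlinarith [mul_pos hT2 hAB]
  · nlinarith [mul_pos hT2 hAB]
end
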